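/- Let 𝐦 = (m_1,...,m_n) be positive integers with m = Σ m_i, and let 𝐦' be 𝐦 with an extra letter n+1 occurring twice. Then A_{𝐦'}(x,y) = G(A_𝐦(x,y)), where G = xy²(∂_x + ∂_y) + (x²y²/2)(∂_x² + ∂_y²) + x²y² ∂_x∂_y and A_𝐦(x,y) = Σ_{π ∈ 𝔖_𝐦} x^{des(π)} y^{m+1-des(π)}. -/

import Mathlib

open MvPolynomial

/-- Number of descents in `a :: rest`, counting consecutive pairs. -/
def desAux : List ℕ → ℕ
  | a :: b :: t => (if b < a then 1 else 0) + desAux (b :: t)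
  | _ => 0

/-- The descent number of a word `w = π₁…π_m`, with the boundary convention
`π₀ = π_{m+1} = 0`. -/
def des (w : List ℕ) : ℕ := desAux (0 :: (w ++ [0]))

/-- The list of all distinct arrangements (multipermutations) of a multiset. -/
noncomputable def arrangements (M : Multiset ℕ) : List (List ℕ) :=
  M.toList.permutations.dedup

/-- The multiset `{1^{m₁}, 2^{m₂}, …, n^{m_n}}` encoded by the list of
multiplicities `ms = [m₁, …, m_n]`. -/
def msetOf (ms : List ℕ) : Multiset ℕ :=
  ((List.range ms.length).flatMap fun i => List.replicate (ms.getD i 0) (i + 1) : List ℕ)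

/-- The homogenized multiset Eulerian polynomial
`A_𝐦(x,y) = Σ_π x^{des π} y^{m+1-des π}`. -/
noncomputable def Abi (ms : List ℕ) : MvPolynomial (Fin 2) ℚ :=
  ((arrangements (msetOf ms)).map fun w =>
    X 0 ^ des w * X 1 ^ ((msetOf ms).card + 1 - des w)).sum

/-- The multiset Eulerian polynomial `A_𝐦(x) = Σ_π x^{des π}`. -/
noncomputable def Auni (ms : List ℕ) : Polynomial ℚ :=
  ((arrangements (msetOf ms)).map fun w => Polynomial.X ^ des w).sum

/-- The Eulerian operator `G = xy²(∂_x+∂_y) + (x²y²/2)(∂_x²+∂_y²) + x²y² ∂_x∂_y`. -/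
noncomputable def Gop (f : MvPolynomial (Fin 2) ℚ) : MvPolynomial (Fin 2) ℚ :=
  X 0 * X 1 ^ 2 * (pderiv (0 : Fin 2) f + pderiv (1 : Fin 2) f)
    + C (1 / 2 : ℚ) * (X 0 ^ 2 * X 1 ^ 2) *
        (pderiv (0 : Fin 2) (pderiv (0 : Fin 2) f) + pderiv (1 : Fin 2) (pderiv (1 : Fin 2) f))
    + X 0 ^ 2 * X 1 ^ 2 * pderiv (0 : Fin 2) (pderiv (1 : Fin 2) f)

/-!
Every arrangement of `𝐦'` arises exactly once from an arrangement `π` of `𝐦` by inserting the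
two copies of the new largest letter `N` into slots `i ≤ j` of `π` (the `m + 1` gaps between
consecutive letters of `0 π 0`). Inserting `N` into a descent slot keeps `des` and multiplies the
monomial of `π` by `y`; inserting it into an ascent slot raises `des` and multiplies it by `x`;
a second `N` put directly before the first one multiplies it by `y`. With `q k ∈ {x, y}` the
weight of slot `k`, the arrangements coming from `π` contribute
`x^d y^e (y ∑ₖ q k + ∑_{i<j} q i q j)`, and since `π` has `d` descent slots and `e = m + 1 - d`
ascent slots this is `G (x^d y^e)`.
-/

open Finset

namespace List

variable {α : Type*}

theorem insertIdx_append_of_le_length (x : α) (t : List α) :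
    ∀ {w : List α} {k : ℕ}, k ≤ w.length → (w ++ t).insertIdx k x = w.insertIdx k x ++ t
  | _, 0, _ => rfl
  | [], _ + 1, h => by simp at h
  | _ :: _, _ + 1, h => by
    rw [cons_append, insertIdx_succ_cons, insertIdx_succ_cons,
      insertIdx_append_of_le_length x t (by simpa using h), cons_append]

variable [DecidableEq α] {a : α}

theorem idxOf_insertIdx_of_le_idxOf : ∀ {w : List α} {k : ℕ}, k ≤ w.idxOf a →
    (w.insertIdx k a).idxOf a = k
  | _, 0, _ => by simp
  | [], _ + 1, h => by simp at h
  | b :: w, k + 1, h => by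
    have hb : b ≠ a := by rintro rfl; simp at h
    rw [idxOf_cons_ne _ hb] at h
    rw [insertIdx_succ_cons, idxOf_cons_ne _ hb, idxOf_insertIdx_of_le_idxOf (by omega)]

theorem erase_insertIdx_of_le_idxOf : ∀ {w : List α} {k : ℕ}, k ≤ w.idxOf a →
    (w.insertIdx k a).erase a = w
  | _, 0, _ => by simp
  | [], _ + 1, h => by simp at h
  | b :: w, k + 1, h => by
    have hb : b ≠ a := by rintro rfl; simp at h
    rw [idxOf_cons_ne _ hb] at h
    rw [insertIdx_succ_cons, erase_cons_tail (by simpa using hb),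
      erase_insertIdx_of_le_idxOf (by omega)]

theorem insertIdx_idxOf_erase : ∀ {w : List α}, a ∈ w → (w.erase a).insertIdx (w.idxOf a) a = w
  | b :: w, h => by
    by_cases hb : b = a
    · subst hb; simp
    · have hw : a ∈ w := by simpa [Ne.symm hb] using h
      rw [idxOf_cons_ne _ hb, erase_cons_tail (by simpa using hb), insertIdx_succ_cons,
        insertIdx_idxOf_erase hw]

theorem idxOf_le_idxOf_erase : ∀ {w : List α}, w.idxOf a ≤ (w.erase a).idxOf a
  | [] => by simp
  | b :: w => by
    by_cases hb : b = a
    · subst hb; simp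
    · rw [idxOf_cons_ne _ hb, erase_cons_tail (by simpa using hb), idxOf_cons_ne _ hb]
      exact Nat.succ_le_succ idxOf_le_idxOf_erase

end List

theorem mem_arrangements_iff {M : Multiset ℕ} {w : List ℕ} :
    w ∈ arrangements M ↔ (w : Multiset ℕ) = M := by
  rw [arrangements, List.mem_dedup, List.mem_permutations, ← Multiset.coe_eq_coe,
    Multiset.coe_toList]

/-- The inverse bijection erases the first `a` and remembers its position. -/
theorem sum_arrangements_cons {β : Type*} [AddCommMonoid β] (M : Multiset ℕ) (a : ℕ)
    (f : List ℕ → β) :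
    ∑ w ∈ (arrangements (a ::ₘ M)).toFinset, f w =
      ∑ w ∈ (arrangements M).toFinset, ∑ k ∈ range (w.idxOf a + 1), f (w.insertIdx k a) := by
  rw [sum_sigma']
  symm
  refine sum_bij' (fun x _ => x.1.insertIdx x.2 a) (fun w _ => ⟨w.erase a, w.idxOf a⟩)
    ?_ ?_ ?_ ?_ fun _ _ => rfl
  · rintro ⟨w, k⟩ h
    simp only [mem_sigma, List.mem_toFinset, mem_arrangements_iff, mem_range] at h ⊢
    rw [← h.1, Multiset.cons_coe, Multiset.coe_eq_coe]
    exact List.perm_insertIdx _ _ (by have := List.idxOf_le_length (l := w) (a := a); omega)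
  · intro w h
    simp only [mem_sigma, List.mem_toFinset, mem_arrangements_iff, mem_range] at h ⊢
    refine ⟨?_, Nat.lt_succ_of_le List.idxOf_le_idxOf_erase⟩
    rw [← Multiset.coe_erase, h, Multiset.erase_cons_head]
  · rintro ⟨w, k⟩ h
    have hk : k ≤ w.idxOf a := Nat.le_of_lt_succ (mem_range.1 (mem_sigma.1 h).2)
    simp [List.erase_insertIdx_of_le_idxOf hk, List.idxOf_insertIdx_of_le_idxOf hk]
  · intro w h
    rw [List.mem_toFinset, mem_arrangements_iff] at h
    exact List.insertIdx_idxOf_erase (by simp [← Multiset.mem_coe, h])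

theorem sum_arrangements_cons_cons {β : Type*} [AddCommMonoid β] {M : Multiset ℕ} {a : ℕ}
    (ha : a ∉ M) (f : List ℕ → β) :
    ∑ w ∈ (arrangements (a ::ₘ a ::ₘ M)).toFinset, f w =
      ∑ w ∈ (arrangements M).toFinset, ∑ j ∈ range (w.length + 1), ∑ i ∈ range (j + 1),
        f ((w.insertIdx j a).insertIdx i a) := by
  rw [sum_arrangements_cons, sum_arrangements_cons]
  refine sum_congr rfl fun w hw => ?_
  have haw : w.idxOf a = w.length := by
    rw [List.mem_toFinset, mem_arrangements_iff] at hw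
    rwa [List.idxOf_eq_length_iff, ← Multiset.mem_coe, hw]
  rw [haw]
  refine sum_congr rfl fun j hj => ?_
  rw [List.idxOf_insertIdx_of_le_idxOf (haw ▸ Nat.le_of_lt_succ (mem_range.1 hj))]

theorem desAux_cons_eq_card : ∀ (a : ℕ) (L : List ℕ),
    desAux (a :: L) = #{k ∈ range L.length | (a :: L).getD (k + 1) 0 < (a :: L).getD k 0}
  | _, [] => rfl
  | a, b :: t => by
    rw [desAux, desAux_cons_eq_card b t, card_filter, card_filter, List.length_cons,
      sum_range_succ']
    simp only [List.getD_cons_succ, List.getD_cons_zero]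
    omega

theorem desAux_insertIdx_succ (N : ℕ) : ∀ (L : List ℕ) (k : ℕ), k + 1 < L.length →
    desAux (L.insertIdx (k + 1) N) + (if L.getD (k + 1) 0 < L.getD k 0 then 1 else 0) =
      desAux L + (if N < L.getD k 0 then 1 else 0) + (if L.getD (k + 1) 0 < N then 1 else 0)
  | a :: b :: t, 0, _ => by
    simp only [List.insertIdx_succ_cons, List.insertIdx_zero, desAux, List.getD_cons_succ,
      List.getD_cons_zero]
    omega
  | a :: b :: t, k + 1, h => by
    have ih := desAux_insertIdx_succ N (b :: t) k (by simpa using h)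
    simp only [List.insertIdx_succ_cons, desAux, List.getD_cons_succ] at ih ⊢
    omega

def padded (w : List ℕ) : List ℕ := 0 :: (w ++ [0])

/-- Slot `k` of `w` lies between `π_k` and `π_{k+1}` (`0 ≤ k ≤ |w|`, with `π_0 = π_{m+1} = 0`);
inserting a letter at slot `k` is `w.insertIdx k`. -/
def IsDescentAt (w : List ℕ) (k : ℕ) : Prop := (padded w).getD (k + 1) 0 < (padded w).getD k 0

instance (w : List ℕ) : DecidablePred (IsDescentAt w) :=
  fun _ => inferInstanceAs (Decidable (_ < _))

theorem des_eq_card (w : List ℕ) : des w = #{k ∈ range (w.length + 1) | IsDescentAt w k} := by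
  simp only [des, desAux_cons_eq_card, List.length_append, List.length_singleton]
  rfl

theorem des_le_length_add_one (w : List ℕ) : des w ≤ w.length + 1 := by
  simpa [des_eq_card] using card_filter_le (range (w.length + 1)) (IsDescentAt w)

theorem padded_insertIdx {w : List ℕ} {k : ℕ} (N : ℕ) (hk : k ≤ w.length) :
    padded (w.insertIdx k N) = (padded w).insertIdx (k + 1) N := by
  rw [padded, padded, List.insertIdx_succ_cons, List.insertIdx_append_of_le_length _ _ hk]

theorem forall_getD_padded {P : ℕ → Prop} {w : List ℕ} (h0 : P 0) (hw : ∀ x ∈ w, P x)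
    (k : ℕ) : P ((padded w).getD k 0) := by
  rcases lt_or_ge k (padded w).length with h | h
  · rw [List.getD_eq_getElem _ _ h]
    have hmem := List.getElem_mem h
    simp only [padded, List.mem_cons, List.mem_append, List.not_mem_nil, or_false] at hmem
    rcases hmem with h' | h' | h'
    · exact h' ▸ h0
    · exact hw _ h'
    · exact h' ▸ h0
  · rw [List.getD_eq_default _ _ h]
    exact h0

theorem getD_padded_le {w : List ℕ} {N : ℕ} (hw : ∀ x ∈ w, x ≤ N) (k : ℕ) :
    (padded w).getD k 0 ≤ N :=
  forall_getD_padded (Nat.zero_le N) hw k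

theorem getD_padded_insertIdx_of_le {w : List ℕ} {i j : ℕ} (N : ℕ) (hij : i ≤ j)
    (hj : j ≤ w.length) : (padded (w.insertIdx j N)).getD i 0 = (padded w).getD i 0 := by
  rw [padded_insertIdx N hj, List.getD_eq_getElem?_getD, List.getD_eq_getElem?_getD,
    List.getElem?_insertIdx_of_lt (by omega)]

theorem getD_padded_insertIdx_self {w : List ℕ} {j : ℕ} (N : ℕ) (hj : j ≤ w.length) :
    (padded (w.insertIdx j N)).getD (j + 1) 0 = N := by
  rw [padded_insertIdx N hj, List.getD_eq_getElem?_getD, List.getElem?_insertIdx_self,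
    if_pos (by simp [padded]; omega), Option.getD_some]

theorem des_insertIdx {w : List ℕ} {k : ℕ} (N : ℕ) (hk : k ≤ w.length) :
    des (w.insertIdx k N) + (if IsDescentAt w k then 1 else 0) =
      des w + (if N < (padded w).getD k 0 then 1 else 0) +
        (if (padded w).getD (k + 1) 0 < N then 1 else 0) := by
  rw [des, ← padded, padded_insertIdx N hk]
  exact desAux_insertIdx_succ N _ k (by simp [padded]; omega)

noncomputable def desMonomial (w : List ℕ) : MvPolynomial (Fin 2) ℚ :=
  X 0 ^ des w * X 1 ^ (w.length + 1 - des w)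

noncomputable def slotWeight (w : List ℕ) (k : ℕ) : MvPolynomial (Fin 2) ℚ :=
  if IsDescentAt w k then X 1 else X 0

theorem slotWeight_insertIdx_of_lt {w : List ℕ} {i j : ℕ} (N : ℕ) (hij : i < j)
    (hj : j ≤ w.length) : slotWeight (w.insertIdx j N) i = slotWeight w i := by
  have h : IsDescentAt (w.insertIdx j N) i ↔ IsDescentAt w i := by
    rw [IsDescentAt, IsDescentAt, getD_padded_insertIdx_of_le N hij.le hj,
      getD_padded_insertIdx_of_le (i := i + 1) N hij hj]
  exact if_congr h rfl rfl

theorem desMonomial_insertIdx_of_lt {w : List ℕ} {k N : ℕ} (hw : ∀ x ∈ w, x ≤ N)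
    (hk : k ≤ w.length) (hN : (padded w).getD (k + 1) 0 < N) :
    desMonomial (w.insertIdx k N) = desMonomial w * slotWeight w k := by
  have hdes := des_insertIdx N hk
  rw [if_neg (getD_padded_le hw k).not_gt, if_pos hN] at hdes
  have hle := des_le_length_add_one w
  rw [desMonomial, desMonomial, slotWeight, List.length_insertIdx_of_le_length hk]
  split_ifs at hdes ⊢
  · rw [show des (w.insertIdx k N) = des w by omega,
      show w.length + 1 + 1 - des w = w.length + 1 - des w + 1 by omega, pow_succ, mul_assoc]
  · rw [show des (w.insertIdx k N) = des w + 1 by omega,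
      show w.length + 1 + 1 - (des w + 1) = w.length + 1 - des w by omega, pow_succ]
    ring

theorem desMonomial_insertIdx_of_eq {w : List ℕ} {k N : ℕ} (hw : ∀ x ∈ w, x ≤ N)
    (hk : k ≤ w.length) (hN : (padded w).getD (k + 1) 0 = N) :
    desMonomial (w.insertIdx k N) = desMonomial w * X 1 := by
  have hdes := des_insertIdx N hk
  have hasc : ¬ IsDescentAt w k := by
    rw [IsDescentAt, hN]
    exact (getD_padded_le hw k).not_gt
  rw [if_neg hasc, if_neg (getD_padded_le hw k).not_gt, hN, if_neg (lt_irrefl N)] at hdes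
  have hle := des_le_length_add_one w
  rw [desMonomial, desMonomial, List.length_insertIdx_of_le_length hk,
    show des (w.insertIdx k N) = des w by omega,
    show w.length + 1 + 1 - des w = w.length + 1 - des w + 1 by omega, pow_succ, mul_assoc]

theorem sum_ite_eq_card_nsmul_add {ι M : Type*} [AddCommMonoid M] (s : Finset ι)
    (p : ι → Prop) [DecidablePred p] (a b : M) :
    ∑ k ∈ s, (if p k then a else b) = #{k ∈ s | p k} • a + (#s - #{k ∈ s | p k}) • b := by
  rw [sum_ite, sum_const, sum_const, ← card_filter_add_card_filter_not (s := s) p,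
    Nat.add_sub_cancel_left]

theorem sum_slotWeight (w : List ℕ) :
    ∑ k ∈ range (w.length + 1), slotWeight w k =
      des w • (X 1 : MvPolynomial (Fin 2) ℚ) + (w.length + 1 - des w) • X 0 := by
  simp only [slotWeight]
  rw [des_eq_card]
  simpa only [card_range] using
    sum_ite_eq_card_nsmul_add (range (w.length + 1)) (IsDescentAt w) (X 1 : MvPolynomial _ ℚ) (X 0)

theorem sum_slotWeight_sq (w : List ℕ) :
    ∑ k ∈ range (w.length + 1), slotWeight w k ^ 2 =
      des w • (X 1 : MvPolynomial (Fin 2) ℚ) ^ 2 + (w.length + 1 - des w) • X 0 ^ 2 := by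
  simp only [slotWeight, ite_pow]
  rw [des_eq_card]
  simpa only [card_range] using sum_ite_eq_card_nsmul_add (range (w.length + 1)) (IsDescentAt w)
    (X 1 ^ 2 : MvPolynomial _ ℚ) (X 0 ^ 2)

theorem two_mul_sum_range_mul_sum_range {R : Type*} [CommRing R] (f : ℕ → R) (n : ℕ) :
    2 * ∑ j ∈ range n, f j * ∑ i ∈ range j, f i =
      (∑ j ∈ range n, f j) ^ 2 - ∑ j ∈ range n, f j ^ 2 := by
  induction n with
  | zero => simp
  | succ n ih => rw [sum_range_succ, sum_range_succ, sum_range_succ, mul_add, ih]; ring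

section Euler

variable {σ R : Type*} [CommRing R] (i : σ)

theorem X_mul_pderiv_X_pow (d : ℕ) :
    X i * pderiv i (X i ^ d) = (d : MvPolynomial σ R) * X i ^ d := by
  rcases d with _ | d
  · simp
  · rw [pderiv_pow, pderiv_X_self]
    push_cast
    ring

theorem X_sq_mul_pderiv_pderiv_X_pow (d : ℕ) :
    X i ^ 2 * pderiv i (pderiv i (X i ^ d)) =
      (d : MvPolynomial σ R) * ((d : MvPolynomial σ R) - 1) * X i ^ d := by
  rcases d with _ | _ | d
  · simp
  · simp
  · simp only [pderiv_pow, pderiv_X_self, pderiv_mul, mul_one, Derivation.map_natCast]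
    push_cast
    ring

end Euler

theorem two_mul_C_half {σ : Type*} : (2 : MvPolynomial σ ℚ) * C (1 / 2) = 1 := by
  rw [← map_ofNat C 2, ← map_mul]
  norm_num

theorem Gop_monomial (d e : ℕ) :
    Gop (X 0 ^ d * X 1 ^ e) = X 0 ^ d * X 1 ^ e * (X 1 * (d • X 1 + e • X 0) +
      C (1 / 2) * ((d • X 1 + e • X 0) ^ 2 - (d • X 1 ^ 2 + e • X 0 ^ 2))) := by
  have h10 : pderiv 1 (X 0 : MvPolynomial (Fin 2) ℚ) = 0 := pderiv_X_of_ne (by decide)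
  have h01 : pderiv 0 (X 1 : MvPolynomial (Fin 2) ℚ) = 0 := pderiv_X_of_ne (by decide)
  have h0 : pderiv 0 (X 1 ^ e : MvPolynomial (Fin 2) ℚ) = 0 := by simp [h01]
  have h1 : pderiv 1 (X 0 ^ d : MvPolynomial (Fin 2) ℚ) = 0 := by simp [h10]
  have h2 : pderiv 0 (pderiv 1 (X 1 ^ e : MvPolynomial (Fin 2) ℚ)) = 0 := by simp [h01]
  simp only [Gop, pderiv_mul, h0, h1, h2, mul_zero, zero_mul, add_zero, zero_add, nsmul_eq_mul]
  linear_combination X 1 ^ (e + 2) * X_mul_pderiv_X_pow (R := ℚ) (0 : Fin 2) d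
    + X 0 ^ (d + 1) * X 1 * X_mul_pderiv_X_pow (R := ℚ) (1 : Fin 2) e
    + C (1 / 2) * X 1 ^ (e + 2) * X_sq_mul_pderiv_pderiv_X_pow (R := ℚ) (0 : Fin 2) d
    + C (1 / 2) * X 0 ^ (d + 2) * X_sq_mul_pderiv_pderiv_X_pow (R := ℚ) (1 : Fin 2) e
    + X 0 * X 1 * (X 1 * pderiv 1 (X 1 ^ e)) * X_mul_pderiv_X_pow (R := ℚ) (0 : Fin 2) d
    + X 0 * X 1 * (d * X 0 ^ d) * X_mul_pderiv_X_pow (R := ℚ) (1 : Fin 2) e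
    - d * e * X 0 ^ (d + 1) * X 1 ^ (e + 1) * two_mul_C_half (σ := Fin 2)

theorem Gop_sum {ι : Type*} (s : Finset ι) (f : ι → MvPolynomial (Fin 2) ℚ) :
    Gop (∑ i ∈ s, f i) = ∑ i ∈ s, Gop (f i) := by
  simp only [Gop, map_sum, mul_sum, ← sum_add_distrib]

theorem sum_desMonomial_insertIdx_insertIdx {w : List ℕ} {N : ℕ} (hw : ∀ x ∈ w, x < N)
    (hN : 0 < N) :
    ∑ j ∈ range (w.length + 1), ∑ i ∈ range (j + 1),
      desMonomial ((w.insertIdx j N).insertIdx i N) = Gop (desMonomial w) := by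
  have hle : ∀ x ∈ w, x ≤ N := fun x hx => (hw x hx).le
  have hslot : ∀ k, (padded w).getD (k + 1) 0 < N := fun k => forall_getD_padded hN hw (k + 1)
  have hstep : ∀ j ∈ range (w.length + 1), ∑ i ∈ range (j + 1),
      desMonomial ((w.insertIdx j N).insertIdx i N) = desMonomial w *
        (slotWeight w j * ∑ i ∈ range j, slotWeight w i + X 1 * slotWeight w j) := by
    intro j hj
    have hj : j ≤ w.length := Nat.le_of_lt_succ (mem_range.1 hj)
    have hlen : j ≤ (w.insertIdx j N).length := by
      rw [List.length_insertIdx_of_le_length hj]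
      omega
    have hle' : ∀ x ∈ w.insertIdx j N, x ≤ N := fun x hx =>
      ((List.mem_insertIdx hj).1 hx).elim le_of_eq (hle x)
    have hpair : ∀ i ∈ range j, desMonomial ((w.insertIdx j N).insertIdx i N) =
        desMonomial w * slotWeight w j * slotWeight w i := by
      intro i hi
      have hi : i < j := mem_range.1 hi
      rw [desMonomial_insertIdx_of_lt hle' (hi.le.trans hlen)
          (by rw [getD_padded_insertIdx_of_le N hi hj]; exact hslot i),
        desMonomial_insertIdx_of_lt hle hj (hslot j), slotWeight_insertIdx_of_lt N hi hj]
    rw [sum_range_succ, sum_congr rfl hpair, ← mul_sum,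
      desMonomial_insertIdx_of_eq hle' hlen (getD_padded_insertIdx_self N hj),
      desMonomial_insertIdx_of_lt hle hj (hslot j)]
    ring
  rw [sum_congr rfl hstep, ← mul_sum, sum_add_distrib, ← mul_sum, desMonomial, Gop_monomial,
    ← sum_slotWeight, ← sum_slotWeight_sq]
  linear_combination (X 0 ^ des w * X 1 ^ (w.length + 1 - des w)) * C (1 / 2) *
      two_mul_sum_range_mul_sum_range (slotWeight w) (w.length + 1)
    - (X 0 ^ des w * X 1 ^ (w.length + 1 - des w)) *
      (∑ j ∈ range (w.length + 1), slotWeight w j * ∑ i ∈ range j, slotWeight w i) *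
        two_mul_C_half

theorem msetOf_append_two (ms : List ℕ) :
    msetOf (ms ++ [2]) = (ms.length + 1) ::ₘ (ms.length + 1) ::ₘ msetOf ms := by
  have hget : ∀ i ∈ List.range ms.length,
      List.replicate ((ms ++ [2]).getD i 0) (i + 1) = List.replicate (ms.getD i 0) (i + 1) :=
    fun i hi => by rw [List.getD_append _ _ _ _ (List.mem_range.1 hi)]
  simp only [msetOf, List.length_append, List.length_singleton, List.range_succ,
    List.flatMap_append, List.flatMap_congr hget, List.flatMap_singleton,
    List.getD_append_right _ _ _ _ le_rfl, Nat.sub_self]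
  rw [← Multiset.coe_add, add_comm]
  rfl

theorem lt_of_mem_msetOf {ms : List ℕ} {x : ℕ} (hx : x ∈ msetOf ms) : x < ms.length + 1 := by
  simp only [msetOf, Multiset.mem_coe, List.mem_flatMap, List.mem_range, List.mem_replicate] at hx
  omega

theorem Abi_eq_sum_desMonomial (ms : List ℕ) :
    Abi ms = ∑ w ∈ (arrangements (msetOf ms)).toFinset, desMonomial w := by
  have hnodup : (arrangements (msetOf ms)).Nodup := List.nodup_dedup _
  rw [Abi, ← List.sum_toFinset _ hnodup]
  refine sum_congr rfl fun w hw => ?_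
  rw [List.mem_toFinset, mem_arrangements_iff] at hw
  rw [desMonomial, ← Multiset.coe_card, hw]

theorem Abi_append_two_general (ms : List ℕ) :
    Abi (ms ++ [2]) = Gop (Abi ms) := by
  have hlt : ∀ x ∈ msetOf ms, x < ms.length + 1 := fun _ => lt_of_mem_msetOf
  rw [Abi_eq_sum_desMonomial, Abi_eq_sum_desMonomial, msetOf_append_two,
    sum_arrangements_cons_cons (fun h => (hlt _ h).false), Gop_sum]
  refine sum_congr rfl fun w hw =>
    sum_desMonomial_insertIdx_insertIdx (fun x hx => hlt x ?_) ms.length.succ_pos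
  rw [List.mem_toFinset, mem_arrangements_iff] at hw
  rwa [← hw, Multiset.mem_coe]

/-- Adjoining a new largest letter `n+1` with multiplicity two corresponds to
applying the operator `G`: `A_{𝐦'}(x,y) = G(A_𝐦(x,y))`. -/
theorem Abi_append_two (ms : List ℕ) (hms : ∀ i ∈ ms, 0 < i) :
    Abi (ms ++ [2]) = Gop (Abi ms) :=
  Abi_append_two_general ms
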